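/- arXiv:1606.08649 — 10 statements merged into one kernel-verified Lean document; each statement's English description precedes it below -/
import Mathlib

section
/- If a monoid M is a Mal'tsev object of the category Mon of monoids, then M is a group, i.e. every element of M is invertible. -/
open CategoryTheory CategoryTheory.Limits

universe v u

variable {C : Type u} [Category.{v} C]

/-- A cospan `(r, s)` is jointly strongly epimorphic: whenever both `r` and `s`
factor through a monomorphism `m`, the monomorphism `m` is an isomorphism. -/
def JointlyStronglyEpi {X Y A : C} (r : X ⟶ A) (s : Y ⟶ A) : Prop :=
  ∀ ⦃M : C⦄ (m : M ⟶ A), Mono m →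
    (∃ r' : X ⟶ M, r' ≫ m = r) → (∃ s' : Y ⟶ M, s' ≫ m = s) → IsIso m

/-- A point `(f, s)` over `B` is strong: for every `g : X ⟶ B`, the second
projection of the pullback of `f` along `g` together with `s` is a jointly
strongly epimorphic pair. -/
def IsStrongPoint [HasPullbacks C] {A B : C} (f : A ⟶ B) (s : B ⟶ A) : Prop :=
  ∀ ⦃X : C⦄ (g : X ⟶ B), JointlyStronglyEpi (pullback.snd g f) s

/-- A point `(f, s)` over `B` is stably strong: every pullback of it along a
morphism `g : X ⟶ B` is a strong point. -/
def IsStablyStrongPoint [HasPullbacks C] {A B : C} (f : A ⟶ B) (s : B ⟶ A)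
    (hs : s ≫ f = 𝟙 B) : Prop :=
  ∀ ⦃X : C⦄ (g : X ⟶ B),
    IsStrongPoint (pullback.fst g f)
      (pullback.lift (𝟙 X) (g ≫ s) (by simp [hs]))

/-- An object `Y` is a Mal'tsev object: for every pullback of split
epimorphisms over `Y`, the two induced sections are jointly strongly
epimorphic. -/
def IsMaltsevObject [HasPullbacks C] (Y : C) : Prop :=
  ∀ ⦃A X : C⦄ (f : A ⟶ Y) (s : Y ⟶ A) (g : X ⟶ Y) (t : Y ⟶ X)
    (hs : s ≫ f = 𝟙 Y) (ht : t ≫ g = 𝟙 Y),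
    JointlyStronglyEpi
      (pullback.lift (𝟙 A) (f ≫ t) (by simp [ht]) : A ⟶ pullback f g)
      (pullback.lift (g ≫ s) (𝟙 X) (by simp [hs]) : X ⟶ pullback f g)

/-- An object `Y` is protomodular: every point over `Y` is stably strong. -/
def IsProtomodularObject [HasPullbacks C] (Y : C) : Prop :=
  ∀ ⦃A : C⦄ (f : A ⟶ Y) (s : Y ⟶ A) (hs : s ≫ f = 𝟙 Y), IsStablyStrongPoint f s hs

/-- `f` is a regular epimorphism. -/
def IsRegularEpi {X Y : C} (f : X ⟶ Y) : Prop := Nonempty (RegularEpi f)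

/-- A commutative square `f' ≫ β = α ≫ f` of regular epimorphisms is a regular
pushout if the comparison morphism into the pullback of `β` and `f` is a
regular epimorphism. -/
def IsRegularPushout [HasPullbacks C] {A' A B' B : C}
    (α : A' ⟶ A) (f' : A' ⟶ B') (f : A ⟶ B) (β : B' ⟶ B)
    (w : f' ≫ β = α ≫ f) : Prop :=
  _root_.IsRegularEpi α ∧ _root_.IsRegularEpi β ∧ _root_.IsRegularEpi f' ∧ _root_.IsRegularEpi f ∧
    _root_.IsRegularEpi (pullback.lift f' α w)

/-- `Y` is a strongly unital object. -/
def StronglyUnitalObject [HasPullbacks C] [HasBinaryProducts C] (Y : C) : Prop :=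
  IsStablyStrongPoint (prod.fst : Y ⨯ Y ⟶ Y) (prod.lift (𝟙 Y) (𝟙 Y)) (prod.lift_fst _ _)

/-- `Y` is a unital object. -/
def UnitalObject [HasPullbacks C] [HasBinaryProducts C] [HasZeroMorphisms C]
    (Y : C) : Prop :=
  IsStablyStrongPoint (prod.fst : Y ⨯ Y ⟶ Y) (prod.lift (𝟙 Y) 0) (prod.lift_fst _ _)

/-- `Y` is a subtractive object: for every split right punctual span
`(s, f, g, t)` over `Y`, the composite `ker(g) ≫ f` is a regular epimorphism. -/
def SubtractiveObject [HasZeroMorphisms C] [HasKernels C] (Y : C) : Prop :=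
  ∀ ⦃X Z : C⦄ (s : X ⟶ Z) (f : Z ⟶ X) (g : Z ⟶ Y) (t : Y ⟶ Z),
    s ≫ f = 𝟙 X → t ≫ g = 𝟙 Y → t ≫ f = 0 →
    _root_.IsRegularEpi (kernel.ι g ≫ f)

/-!
Fix `m : M`, let `A = M ∗ ℕ` with generator `z`, and split `f : A → M`, the identity on `M` with
`z ↦ m`, by the inclusion `s : M → A`. Applied to `(f, s)` twice, the Mal'tsev condition says
that the pairs `(a, s (f a))` and `(s (f a), a)` generate the kernel pair of `f` as a monoid, so
they generate `(z, z)`. Forgetting words with two or more `z`s, a product of such pairs relates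
`p z q` to `r z t` only when both arise from one word `p m L m t` by replacing one of the two
displayed `m`s by `z`. For `(z, z)` this gives `m L = 1 = L m`.
-/

theorem JointlyStronglyEpi.submonoid_eq_top {X Y A : MonCat} {r : X ⟶ A} {s : Y ⟶ A}
    (h : JointlyStronglyEpi r s) (N : Submonoid A) (hr : ∀ x, r x ∈ N) (hs : ∀ y, s y ∈ N) :
    N = ⊤ := by
  let ι : MonCat.of N ⟶ A := MonCat.ofHom N.subtype
  have : IsIso ι := h ι (ConcreteCategory.mono_of_injective _ Subtype.val_injective)
    ⟨MonCat.ofHom (r.hom.codRestrict N hr), rfl⟩ ⟨MonCat.ofHom (s.hom.codRestrict N hs), rfl⟩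
  refine (Submonoid.eq_top_iff' N).2 fun a => ?_
  obtain ⟨n, rfl⟩ := (ConcreteCategory.bijective_of_isIso ι).2 a
  exact n.2

theorem IsMaltsevObject.diag_mem_of_submonoid {M A : Type u} [Monoid M] [Monoid A]
    (h : IsMaltsevObject (MonCat.of M)) (f : A →* M) (s : M →* A) (hs : f.comp s = .id M)
    (R : Submonoid (A × A)) (hR₁ : ∀ a, (a, s (f a)) ∈ R) (hR₂ : ∀ a, (s (f a), a) ∈ R)
    (a : A) : (a, a) ∈ R := by
  let f' : MonCat.of A ⟶ MonCat.of M := MonCat.ofHom f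
  let s' : MonCat.of M ⟶ MonCat.of A := MonCat.ofHom s
  have hs' : s' ≫ f' = 𝟙 _ := congrArg MonCat.ofHom hs
  let legs : (pullback f' f' : MonCat) →* A × A :=
    (pullback.fst f' f').hom.prod (pullback.snd f' f').hom
  have legs_lift {W : MonCat} (u v : W ⟶ MonCat.of A) (w : u ≫ f' = v ≫ f') (x : W) :
      legs (pullback.lift u v w x) = (u x, v x) :=
    Prod.ext (ConcreteCategory.congr_hom (pullback.lift_fst u v w) x)
      (ConcreteCategory.congr_hom (pullback.lift_snd u v w) x)
  have hR : R.comap legs = ⊤ := by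
    refine (h f' s' f' s' hs' hs').submonoid_eq_top _ (fun b => ?_) (fun b => ?_)
    · rw [Submonoid.mem_comap, legs_lift]
      exact hR₁ b
    · rw [Submonoid.mem_comap, legs_lift]
      exact hR₂ b
  have hdiag := hR ▸ Submonoid.mem_top (pullback.lift (𝟙 (MonCat.of A)) (𝟙 _) rfl a)
  rwa [Submonoid.mem_comap, legs_lift] at hdiag

/-- The Rees quotient of `M ∗ ℕ` by the ideal of words with at least two letters from `ℕ`, which
collapses to `overflow`; `mark p q` stands for `p z q`. -/
inductive Marked (M : Type*)
  | plain : M → Marked M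
  | mark : M → M → Marked M
  | overflow : Marked M

namespace Marked

variable {M : Type*} [Monoid M]

instance : Mul (Marked M) where
  mul
    | plain c, plain c' => plain (c * c')
    | plain c, mark p q => mark (c * p) q
    | mark p q, plain c => mark p (q * c)
    | _, _ => overflow

instance : One (Marked M) := ⟨plain 1⟩

@[simp] theorem one_def : (1 : Marked M) = plain 1 := rfl
@[simp] theorem plain_mul_plain (c c' : M) : plain c * plain c' = plain (c * c') := rfl
@[simp] theorem plain_mul_mark (c p q : M) : plain c * mark p q = mark (c * p) q := rfl
@[simp] theorem mark_mul_plain (p q c : M) : mark p q * plain c = mark p (q * c) := rfl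
@[simp] theorem mark_mul_mark (p q p' q' : M) : mark p q * mark p' q' = overflow := rfl
@[simp] theorem overflow_mul (k : Marked M) : overflow * k = overflow := by cases k <;> rfl
@[simp] theorem mul_overflow (k : Marked M) : k * overflow = overflow := by cases k <;> rfl

instance : Monoid (Marked M) where
  one_mul k := by cases k <;> simp
  mul_one k := by cases k <;> simp
  mul_assoc k l n := by cases k <;> cases l <;> cases n <;> simp [mul_assoc]

theorem mark_pow_add_two (p q : M) (k : ℕ) : mark p q ^ (k + 2) = overflow := by
  rw [pow_succ, pow_succ, mul_assoc, mark_mul_mark, mul_overflow]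

def plainHom : M →* Marked M where
  toFun := plain
  map_one' := rfl
  map_mul' _ _ := rfl

/-- In the `mark`–`mark` case, `p z q` and `r z t` both come from `p m L m t` (first
disjunct) or both from `r m L m q` (second disjunct). -/
def Related (m : M) : Marked M → Marked M → Prop
  | plain c, plain c' => c = c'
  | plain c, mark p q => c = p * m * q
  | mark p q, plain c => p * m * q = c
  | mark p q, mark r t =>
      ∃ L, (r = p * m * L ∧ q = L * m * t) ∨ (p = r * m * L ∧ t = L * m * q)
  | _, _ => True

theorem Related.symm {m : M} {k l : Marked M} (h : Related m k l) : Related m l k := by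
  cases k <;> cases l <;> simp only [Related] at h ⊢
  all_goals first | exact h.symm | (obtain ⟨L, h⟩ := h; exact ⟨L, h.symm⟩)

theorem Related.mul {m : M} {k₁ l₁ k₂ l₂ : Marked M} (h₁ : Related m k₁ l₁)
    (h₂ : Related m k₂ l₂) : Related m (k₁ * k₂) (l₁ * l₂) := by
  rcases k₁ with a | ⟨p, q⟩ | _ <;> rcases l₁ with b | ⟨r, t⟩ | _ <;>
    rcases k₂ with c | ⟨p', q'⟩ | _ <;> rcases l₂ with d | ⟨r', t'⟩ | _ <;>
    simp only [Related] at h₁ h₂ ⊢ <;> subst_vars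
  all_goals try (simp only [mul_assoc]; done)
  case plain.plain.mark.mark =>
    obtain ⟨L, ⟨rfl, rfl⟩ | ⟨rfl, rfl⟩⟩ := h₂
    exacts [⟨L, .inl ⟨by simp only [mul_assoc], rfl⟩⟩, ⟨L, .inr ⟨by simp only [mul_assoc], rfl⟩⟩]
  case mark.mark.plain.plain =>
    obtain ⟨L, ⟨rfl, rfl⟩ | ⟨rfl, rfl⟩⟩ := h₁
    exacts [⟨L, .inl ⟨rfl, by simp only [mul_assoc]⟩⟩, ⟨L, .inr ⟨rfl, by simp only [mul_assoc]⟩⟩]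
  case plain.mark.mark.plain =>
    exact ⟨t * p', .inr ⟨by simp only [mul_assoc], by simp only [mul_assoc]⟩⟩
  case mark.plain.plain.mark =>
    exact ⟨q * r', .inl ⟨by simp only [mul_assoc], by simp only [mul_assoc]⟩⟩

def relSubmonoid (m : M) : Submonoid (Marked M × Marked M) where
  carrier := {k | Related m k.1 k.2}
  one_mem' := rfl
  mul_mem' := Related.mul

@[simp] theorem mem_relSubmonoid {m : M} {k : Marked M × Marked M} :
    k ∈ relSubmonoid m ↔ Related m k.1 k.2 := Iff.rfl

theorem isUnit_of_related_mark_one_one {m : M} (h : Related m (mark 1 1) (mark 1 1)) :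
    IsUnit m := by
  obtain ⟨L, ⟨h₁, h₂⟩ | ⟨h₁, h₂⟩⟩ := h <;>
    exact isUnit_iff_exists.2 ⟨L, by simpa using h₁.symm, by simpa using h₂.symm⟩

end Marked

open Marked Monoid
open scoped Monoid.Coprod

section

variable {M : Type*} [Monoid M]

def evalAt (m : M) : M ∗ Multiplicative ℕ →* M := Coprod.lift (.id M) (powersHom M m)

def markHom : M ∗ Multiplicative ℕ →* Marked M :=
  Coprod.lift plainHom (powersHom _ (mark 1 1))

theorem related_markHom_plain_evalAt (m : M) (w : M ∗ Multiplicative ℕ) :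
    Related m (markHom w) (plain (evalAt m w)) := by
  induction w using Coprod.induction_on with
  | inl x => simp [markHom, evalAt, plainHom, Related]
  | inr n =>
    simp only [markHom, evalAt, Coprod.lift_apply_inr, powersHom_apply]
    rcases n.toAdd with _ | _ | k <;> simp [Related, mark_pow_add_two]
  | mul x y hx hy => rw [map_mul, map_mul, ← plain_mul_plain]; exact hx.mul hy

end

/-- If a monoid `M` is a Mal'tsev object of `Mon`, then `M` is a group. -/
theorem statement1 (M : Type) [Monoid M]
    (h : IsMaltsevObject (MonCat.of M)) : ∀ m : M, IsUnit m := by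
  intro m
  have hz := h.diag_mem_of_submonoid (evalAt m) Coprod.inl rfl
    ((relSubmonoid m).comap (markHom.prodMap markHom))
    (related_markHom_plain_evalAt m) (fun w => (related_markHom_plain_evalAt m w).symm)
    (Coprod.inr (Multiplicative.ofAdd 1))
  exact isUnit_of_related_mark_one_one (by simpa [markHom] using hz)
end

section
/- In a finitely complete category, strong points are closed under quotients: given points (f : A → B, s : B → A) and (f' : A' → B', s' : B' → A') together with regular epimorphisms α : A → A' and β : B → B' such that f' ∘ α = β ∘ f and α ∘ s = s' ∘ β, if (f, s) is a strong point then (f', s') is a strong point. -/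
open CategoryTheory CategoryTheory.Limits

universe v u

variable {C : Type u} [Category.{v} C]

/-
The pair `(pullback.snd g f', s')` is the image under the regular epimorphism `α` of the
pair `(pullback.snd g' f, s)`, where `g'` is the pullback of `g` along `β`. The image of a
jointly strongly epimorphic pair under a strong epimorphism `α` is again jointly strongly
epimorphic: if it factors through a monomorphism `m`, the original pair factors through the
pullback of `m` along `α`, which is therefore an isomorphism; so `α` factors through `m`,
making `m` a strong epimorphism, hence an isomorphism.
-/

theorem JointlyStronglyEpi.of_comp_strongEpi [HasPullbacks C] {X Y A X' Y' A' : C}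
    {r : X ⟶ A} {s : Y ⟶ A} (h : JointlyStronglyEpi r s) (α : A ⟶ A') [StrongEpi α]
    {r' : X' ⟶ A'} {s' : Y' ⟶ A'} (a : X ⟶ X') (b : Y ⟶ Y')
    (hr : r ≫ α = a ≫ r') (hs : s ≫ α = b ≫ s') :
    JointlyStronglyEpi r' s' := by
  rintro M m hm ⟨r'', hr''⟩ ⟨s'', hs''⟩
  have : IsIso (pullback.fst α m) :=
    h _ inferInstance
      ⟨pullback.lift r (a ≫ r'') (by simp [hr, hr'']), pullback.lift_fst _ _ _⟩
      ⟨pullback.lift s (b ≫ s'') (by simp [hs, hs'']), pullback.lift_fst _ _ _⟩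
  have hα : (inv (pullback.fst α m) ≫ pullback.snd α m) ≫ m = α := by
    rw [Category.assoc, ← pullback.condition, IsIso.inv_hom_id_assoc]
  have : StrongEpi ((inv (pullback.fst α m) ≫ pullback.snd α m) ≫ m) := by
    rw [hα]; infer_instance
  have : StrongEpi m := strongEpi_of_strongEpi (inv (pullback.fst α m) ≫ pullback.snd α m) m
  exact isIso_of_mono_of_strongEpi m

theorem statement5_general [HasFiniteLimits C] {A B A' B' : C}
    (f : A ⟶ B) (s : B ⟶ A)
    (f' : A' ⟶ B') (s' : B' ⟶ A')
    (α : A ⟶ A') (β : B ⟶ B') (hα : _root_.IsRegularEpi α)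
    (w1 : α ≫ f' = f ≫ β) (w2 : s ≫ α = β ≫ s')
    (h : IsStrongPoint f s) :
    IsStrongPoint f' s' := by
  intro X g
  have := isRegularEpi_of_regularEpi hα.some
  refine (h (pullback.snd g β)).of_comp_strongEpi α
    (pullback.lift (pullback.fst _ f ≫ pullback.fst g β) (pullback.snd _ f ≫ α) ?_) β ?_ w2
  · rw [Category.assoc, pullback.condition, pullback.condition_assoc, Category.assoc, w1]
  · exact (pullback.lift_snd _ _ _).symm

/-- In a finitely complete category, strong points are closed under quotients. -/
theorem statement5 [HasFiniteLimits C] {A B A' B' : C}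
    (f : A ⟶ B) (s : B ⟶ A) (hs : s ≫ f = 𝟙 B)
    (f' : A' ⟶ B') (s' : B' ⟶ A') (hs' : s' ≫ f' = 𝟙 B')
    (α : A ⟶ A') (β : B ⟶ B') (hα : _root_.IsRegularEpi α) (hβ : _root_.IsRegularEpi β)
    (w1 : α ≫ f' = f ≫ β) (w2 : s ≫ α = β ≫ s')
    (h : IsStrongPoint f s) :
    IsStrongPoint f' s' :=
  statement5_general f s f' s' α β hα w1 w2 h
end

section
/- In a regular category, every double split epimorphism (f' : D → C, s' : C → D), (g' : D → A, t' : A → D), (f : A → B, s : B → A), (g : C → B, t : B → C) in which the point (g, t) is stably strong is a regular pushout; in particular the comparison morphism ⟨g', f'⟩ : D → A ×_B C into the pullback of f and g is a regular epimorphism. -/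
/-!
Pulling the stably strong point `(g, t)` back along `f` gives a strong point
`(π_A : A ×_B Cc ⟶ A, ⟨1, t f⟩)`, so `⟨1, t f⟩` and the projection of the pullback of `π_A`
along `s` are jointly strongly epimorphic. Both factor through the comparison
`⟨g', f'⟩ : D ⟶ A ×_B Cc` (through `t'` and through `π_Cc ≫ s'` respectively), so the comparison
is an extremal epimorphism, hence a regular one in a regular category.
-/

open CategoryTheory CategoryTheory.Limits

universe v u

variable {C : Type u} [Category.{v} C]

theorem isRegularEpi_iff_isRegularEpi_class {X Y : C} (f : X ⟶ Y) :
    _root_.IsRegularEpi f ↔ CategoryTheory.IsRegularEpi f :=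
  ⟨fun h ↦ ⟨h⟩, fun h ↦ h.1⟩

theorem isRegularEpi_of_section {X Y : C} {f : X ⟶ Y} {s : Y ⟶ X} (hs : s ≫ f = 𝟙 Y) :
    _root_.IsRegularEpi f :=
  have : IsSplitEpi f := ⟨⟨⟨s, hs⟩⟩⟩
  ⟨RegularEpi.ofSplitEpi f⟩

theorem regular_of_hasCoequalizer_of_stable [HasFiniteLimits C]
    (hcoeq : ∀ {X Y : C} (f : X ⟶ Y),
      HasCoequalizer (pullback.fst f f) (pullback.snd f f))
    (hstab : ∀ {X Y Z : C} (f : X ⟶ Z) (g : Y ⟶ Z),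
      _root_.IsRegularEpi f → _root_.IsRegularEpi (pullback.snd f g)) :
    Regular C where
  hasCoequalizer_of_isKernelPair {_ _ _ f g₁ g₂} k :=
    have := hcoeq f
    hasColimit_of_iso (F := parallelPair (pullback.fst f f) (pullback.snd f f))
      (parallelPair.ext k.isoPullback (Iso.refl _))
  regularEpiIsStableUnderBaseChange :=
    .of_forall_exists_isPullback fun f g _ hg ↦
      ⟨_, _, _, (IsPullback.of_hasPullback g f).flip,
        (isRegularEpi_iff_isRegularEpi_class _).1 (hstab g f hg.1)⟩

theorem JointlyStronglyEpi.extremalEpi_of_factors [HasEqualizers C] {X Y Z W : C}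
    {r : X ⟶ W} {σ : Y ⟶ W} (hj : JointlyStronglyEpi r σ) (d : Z ⟶ W)
    (r' : X ⟶ Z) (hr : r' ≫ d = r) (σ' : Y ⟶ Z) (hσ : σ' ≫ d = σ) : ExtremalEpi d where
  left_cancellation u v huv := by
    have : IsIso (equalizer.ι u v) :=
      hj _ inferInstance ⟨r' ≫ equalizer.lift d huv, by simp [hr]⟩
        ⟨σ' ≫ equalizer.lift d huv, by simp [hσ]⟩
    exact (cancel_epi (equalizer.ι u v)).1 (equalizer.condition u v)
  isIso p i fac _ :=
    hj i inferInstance ⟨r' ≫ p, by simp [fac, hr]⟩ ⟨σ' ≫ p, by simp [fac, hσ]⟩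

theorem JointlyStronglyEpi.isRegularEpi_of_factors [Regular C] {X Y Z W : C}
    {r : X ⟶ W} {σ : Y ⟶ W} (hj : JointlyStronglyEpi r σ) (d : Z ⟶ W)
    (r' : X ⟶ Z) (hr : r' ≫ d = r) (σ' : Y ⟶ Z) (hσ : σ' ≫ d = σ) : _root_.IsRegularEpi d :=
  have := hj.extremalEpi_of_factors d r' hr σ' hσ
  (isRegularEpi_iff_isRegularEpi_class d).2 inferInstance

theorem section_comp_pullback_lift [HasPullbacks C] {D A B Cc : C} {f' : D ⟶ Cc} {g' : D ⟶ A}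
    {f : A ⟶ B} {g : Cc ⟶ B} (c1 : f' ≫ g = g' ≫ f) {t' : A ⟶ D} {t : B ⟶ Cc}
    (ht : t ≫ g = 𝟙 B) (ht' : t' ≫ g' = 𝟙 A) (c3 : t' ≫ f' = f ≫ t) :
    t' ≫ pullback.lift g' f' c1.symm = pullback.lift (𝟙 A) (f ≫ t) (by simp [ht]) := by
  apply pullback.hom_ext
  · simpa only [Category.assoc, pullback.lift_fst] using ht'
  · simpa only [Category.assoc, pullback.lift_snd] using c3

theorem pullback_snd_factors_through_pullback_lift [HasPullbacks C] {D A B Cc : C}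
    {f' : D ⟶ Cc} {g' : D ⟶ A} {f : A ⟶ B} {g : Cc ⟶ B} (c1 : f' ≫ g = g' ≫ f)
    {s' : Cc ⟶ D} {s : B ⟶ A} (hs : s ≫ f = 𝟙 B) (hs' : s' ≫ f' = 𝟙 Cc)
    (c2 : s' ≫ g' = g ≫ s) :
    (pullback.snd s (pullback.fst f g) ≫ pullback.snd f g ≫ s') ≫ pullback.lift g' f' c1.symm =
      pullback.snd s (pullback.fst f g) := by
  apply pullback.hom_ext
  · simp only [Category.assoc, pullback.lift_fst, c2]
    rw [← pullback.condition_assoc, ← pullback.condition_assoc, reassoc_of% hs]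
    exact pullback.condition
  · simp only [Category.assoc, pullback.lift_snd, hs', Category.comp_id]

theorem statement7_general [HasFiniteLimits C]
    (hcoeq : ∀ {X Y : C} (f : X ⟶ Y),
      HasCoequalizer (pullback.fst f f) (pullback.snd f f))
    (hstab : ∀ {X Y Z : C} (f : X ⟶ Z) (g : Y ⟶ Z),
      _root_.IsRegularEpi f → _root_.IsRegularEpi (pullback.snd f g))
    {D A B Cc : C}
    (f' : D ⟶ Cc) (s' : Cc ⟶ D) (hs' : s' ≫ f' = 𝟙 Cc)
    (g' : D ⟶ A) (t' : A ⟶ D) (ht' : t' ≫ g' = 𝟙 A)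
    (f : A ⟶ B) (s : B ⟶ A) (hs : s ≫ f = 𝟙 B)
    (g : Cc ⟶ B) (t : B ⟶ Cc) (ht : t ≫ g = 𝟙 B)
    (c1 : f' ≫ g = g' ≫ f) (c2 : s' ≫ g' = g ≫ s)
    (c3 : t' ≫ f' = f ≫ t)
    (hgt : IsStablyStrongPoint g t ht) :
    IsRegularPushout f' g' g f c1.symm := by
  have := regular_of_hasCoequalizer_of_stable hcoeq hstab
  refine ⟨isRegularEpi_of_section hs', isRegularEpi_of_section hs,
    isRegularEpi_of_section ht', isRegularEpi_of_section ht, ?_⟩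
  exact (hgt f s).isRegularEpi_of_factors _ _
    (pullback_snd_factors_through_pullback_lift c1 hs hs' c2) t'
    (section_comp_pullback_lift c1 ht ht' c3)

/-- In a regular category, every double split epimorphism in which the point
`(g, t)` is stably strong is a regular pushout. -/
theorem statement7 [HasFiniteLimits C]
    (hcoeq : ∀ {X Y : C} (f : X ⟶ Y),
      HasCoequalizer (pullback.fst f f) (pullback.snd f f))
    (hstab : ∀ {X Y Z : C} (f : X ⟶ Z) (g : Y ⟶ Z),
      _root_.IsRegularEpi f → _root_.IsRegularEpi (pullback.snd f g))
    {D A B Cc : C}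
    (f' : D ⟶ Cc) (s' : Cc ⟶ D) (hs' : s' ≫ f' = 𝟙 Cc)
    (g' : D ⟶ A) (t' : A ⟶ D) (ht' : t' ≫ g' = 𝟙 A)
    (f : A ⟶ B) (s : B ⟶ A) (hs : s ≫ f = 𝟙 B)
    (g : Cc ⟶ B) (t : B ⟶ Cc) (ht : t ≫ g = 𝟙 B)
    (c1 : f' ≫ g = g' ≫ f) (c2 : s' ≫ g' = g ≫ s)
    (c3 : t' ≫ f' = f ≫ t) (c4 : t ≫ s' = s ≫ t')
    (hgt : IsStablyStrongPoint g t ht) :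
    IsRegularPushout f' g' g f c1.symm :=
  statement7_general hcoeq hstab f' s' hs' g' t' ht' f s hs g t ht c1 c2 c3 hgt
end

section
/- In a regular category, let g : A' → A, h : B' → B, f' : A' → B' and f : A → B be regular epimorphisms with f ∘ g = h ∘ f', and let f'' : Eq(g) → Eq(h) be the induced morphism between the kernel pairs of g and h, commuting with the kernel-pair projections. If one of the two squares f' ∘ π_i = π_i ∘ f'' (i = 1, 2) formed by f'', f' and the kernel-pair projections is a regular pushout (so in particular f'' is a regular epimorphism), then the square f ∘ g = h ∘ f' is a regular pushout. -/
open CategoryTheory CategoryTheory.Limits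

universe v u

variable {C : Type u} [Category.{v} C]

/-! Let `(q₁, q₂)` be the kernel pair of `h`. The map `Eq(h) ×_{B'} A' → B' ×_B A`,
`(r, a') ↦ (q₂ r, g a')`, is a base change of `g`, hence a regular epimorphism. Preceded by the
comparison `Eq(g) → Eq(h) ×_{B'} A'` it becomes the second kernel-pair projection of `g` followed
by the comparison `A' → B' ×_B A`, so the latter is the second factor of a strong epimorphism;
in a regular category this makes it regular. -/

namespace CategoryTheory

theorem Regular.of_hasCoequalizer_of_isRegularEpi_pullback_snd [HasFiniteLimits C]
    (hcoeq : ∀ {X Y : C} (f : X ⟶ Y),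
      HasCoequalizer (pullback.fst f f) (pullback.snd f f))
    (hstab : ∀ {X Y Z : C} (f : X ⟶ Z) (g : Y ⟶ Z),
      _root_.IsRegularEpi f → _root_.IsRegularEpi (pullback.snd f g)) :
    Regular C where
  hasCoequalizer_of_isKernelPair {_ _ _ f _ _} k :=
    have := hcoeq f
    hasColimit_of_iso (F := parallelPair (pullback.fst f f) (pullback.snd f f))
      (parallelPair.ext k.isoPullback (Iso.refl _))
  regularEpiIsStableUnderBaseChange :=
    .of_forall_exists_isPullback fun f g _ hg =>
      ⟨_, _, _, (IsPullback.of_hasPullback g f).flip, ⟨hstab g f hg.regularEpi⟩⟩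

theorem exists_isPullback_pullback_of_isKernelPair [HasPullbacks C] {A' A B' B R : C}
    {g : A' ⟶ A} {h : B' ⟶ B} {f' : A' ⟶ B'} {f : A ⟶ B} (w : g ≫ f = f' ≫ h)
    {q₁ q₂ : R ⟶ B'} (hq : IsKernelPair h q₁ q₂) :
    ∃ χ : pullback q₁ f' ⟶ pullback h f, χ ≫ pullback.fst h f = pullback.fst q₁ f' ≫ q₂ ∧
      IsPullback χ (pullback.snd q₁ f') (pullback.snd h f) g := by
  refine ⟨pullback.lift (pullback.fst q₁ f' ≫ q₂) (pullback.snd q₁ f' ≫ g)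
    (by rw [Category.assoc, ← hq.w, Category.assoc, w, pullback.condition_assoc]),
    pullback.lift_fst _ _ _, .of_right ?_ (pullback.lift_snd _ _ _) (.of_hasPullback h f)⟩
  rw [pullback.lift_fst, w]
  exact (IsPullback.of_hasPullback q₁ f').paste_horiz hq.flip

theorem Regular.isRegularEpi_pullback_lift_of_kernelPair [Regular C] {A' A B' B E R : C}
    {g : A' ⟶ A} {h : B' ⟶ B} {f' : A' ⟶ B'} {f : A ⟶ B} [hg : IsRegularEpi g]
    (w : g ≫ f = f' ≫ h) {p₁ p₂ : E ⟶ A'} (hp : p₁ ≫ g = p₂ ≫ g)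
    {q₁ q₂ : R ⟶ B'} (hq : IsKernelPair h q₁ q₂) (f'' : E ⟶ R)
    (w₁ : f'' ≫ q₁ = p₁ ≫ f') (w₂ : f'' ≫ q₂ = p₂ ≫ f')
    [hψ : IsRegularEpi (pullback.lift f'' p₁ w₁)] :
    IsRegularEpi (pullback.lift f' g w.symm) := by
  obtain ⟨χ, hχ, sq⟩ := exists_isPullback_pullback_of_isKernelPair w hq
  have : IsRegularEpi χ := Regular.regularEpiIsStableUnderBaseChange.of_isPullback sq.flip hg
  have fac : pullback.lift f'' p₁ w₁ ≫ χ = p₂ ≫ pullback.lift f' g w.symm := by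
    ext
    · rw [Category.assoc, hχ, pullback.lift_fst_assoc, w₂, Category.assoc, pullback.lift_fst]
    · rw [Category.assoc, sq.w, pullback.lift_snd_assoc, hp, Category.assoc, pullback.lift_snd]
  have : StrongEpi (p₂ ≫ pullback.lift f' g w.symm) := fac ▸ inferInstance
  have := strongEpi_of_strongEpi p₂ (pullback.lift f' g w.symm)
  infer_instance

end CategoryTheory

/-- Bourn's lemma: in a regular category, given a commutative square of
regular epimorphisms `g ≫ f = f' ≫ h` and the induced morphism `f''` between
the kernel pairs of `g` and `h`, if one of the two squares formed by `f''`,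
`f'` and the kernel-pair projections is a regular pushout, then the square
`g ≫ f = f' ≫ h` is a regular pushout. -/
theorem statement8 [HasFiniteLimits C]
    (hcoeq : ∀ {X Y : C} (f : X ⟶ Y),
      HasCoequalizer (pullback.fst f f) (pullback.snd f f))
    (hstab : ∀ {X Y Z : C} (f : X ⟶ Z) (g : Y ⟶ Z),
      _root_.IsRegularEpi f → _root_.IsRegularEpi (pullback.snd f g))
    {A' A B' B : C}
    (g : A' ⟶ A) (h : B' ⟶ B) (f' : A' ⟶ B') (f : A ⟶ B)
    (hg : _root_.IsRegularEpi g) (hh : _root_.IsRegularEpi h)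
    (hf' : _root_.IsRegularEpi f') (hf : _root_.IsRegularEpi f)
    (w : g ≫ f = f' ≫ h)
    (f'' : pullback g g ⟶ pullback h h)
    (w1 : f'' ≫ pullback.fst h h = pullback.fst g g ≫ f')
    (w2 : f'' ≫ pullback.snd h h = pullback.snd g g ≫ f')
    (hyp : IsRegularPushout (pullback.fst g g) f'' f' (pullback.fst h h) w1 ∨
           IsRegularPushout (pullback.snd g g) f'' f' (pullback.snd h h) w2) :
    IsRegularPushout g f' f h w.symm := by
  have : Regular C := Regular.of_hasCoequalizer_of_isRegularEpi_pullback_snd hcoeq hstab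
  refine ⟨hg, hh, hf', hf, ?_⟩
  rcases hyp with ⟨-, -, -, -, hψ⟩ | ⟨-, -, -, -, hψ⟩
  · exact (Regular.isRegularEpi_pullback_lift_of_kernelPair (hg := ⟨hg⟩) (hψ := ⟨hψ⟩) w
      pullback.condition (.of_hasPullback h) f'' w1 w2).regularEpi
  · exact (Regular.isRegularEpi_pullback_lift_of_kernelPair (hg := ⟨hg⟩) (hψ := ⟨hψ⟩) w
      pullback.condition.symm (IsKernelPair.of_hasPullback h).flip f'' w2 w1).regularEpi
end

section
/- In a regular category, given points (f : A → B, s : B → A) and (f' : A' → B', s' : B' → A') together with regular epimorphisms α : A → A' and β : B → B' such that f' ∘ α = β ∘ f and α ∘ s = s' ∘ β, if the point (f, s) is stably strong then the square f' ∘ α = β ∘ f is a regular pushout. -/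
open CategoryTheory CategoryTheory.Limits

universe v u

variable {C : Type u} [Category.{v} C]

/-!
The comparison `φ = (f, α) : A ⟶ B ×_{B'} A'` is an extremal epimorphism, hence a regular one in a
regular category. Let `φ` factor through a monomorphism `m`. Pull the point `(f, s)` back along the
first projection `k₁` of the kernel pair `R[β]`; the resulting point is strong, so its pullback along
the diagonal `B ⟶ R[β]` (which is `A`) and its section are jointly strongly epic into
`R[β] ×_B A`. The map `Θ : R[β] ×_B A ⟶ B ×_{B'} A'`, `(b₁, b₂, a) ↦ (b₂, α a)`, is `φ` on the first
part and `k₂ ≫ s ≫ φ` on the section (because `α s = s' β`), so `Θ` factors through `m`. But `Θ` is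
a pullback of the regular epimorphism `α`, hence a strong epimorphism, so `m` is invertible.
-/

theorem regular_of_isRegularEpi_pullback_snd [HasFiniteLimits C]
    (hcoeq : ∀ {X Y : C} (f : X ⟶ Y),
      HasCoequalizer (pullback.fst f f) (pullback.snd f f))
    (hstab : ∀ {X Y Z : C} (f : X ⟶ Z) (g : Y ⟶ Z),
      _root_.IsRegularEpi f → _root_.IsRegularEpi (pullback.snd f g)) :
    Regular C where
  hasCoequalizer_of_isKernelPair {_ _ _ f _ _} h :=
    have := hcoeq f
    hasColimit_of_iso (F := parallelPair (pullback.fst f f) (pullback.snd f f))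
      (parallelPair.ext h.isoPullback (Iso.refl _))
  regularEpiIsStableUnderBaseChange := .of_forall_exists_isPullback fun f g _ hg =>
    ⟨_, _, _, (IsPullback.of_hasPullback g f).flip, ⟨hstab g f hg.regularEpi⟩⟩

theorem JointlyStronglyEpi.exists_lift_of_factors [HasPullbacks C] {X Y S P M : C}
    {r : X ⟶ S} {t : Y ⟶ S} (h : JointlyStronglyEpi r t) (θ : S ⟶ P) (m : M ⟶ P) [Mono m]
    (hr : ∃ r', r' ≫ m = r ≫ θ) (ht : ∃ t', t' ≫ m = t ≫ θ) : ∃ l, l ≫ m = θ := by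
  obtain ⟨r', hr'⟩ := hr
  obtain ⟨t', ht'⟩ := ht
  have : IsIso (pullback.fst θ m) := h _ inferInstance
    ⟨pullback.lift r r' hr'.symm, pullback.lift_fst _ _ _⟩
    ⟨pullback.lift t t' ht'.symm, pullback.lift_fst _ _ _⟩
  exact ⟨inv (pullback.fst θ m) ≫ pullback.snd θ m, by simp [← pullback.condition]⟩

section KernelPairComparison

variable [HasPullbacks C] {A B A' B' : C} (f : A ⟶ B) (f' : A' ⟶ B') (α : A ⟶ A') (β : B ⟶ B')
  (w : α ≫ f' = f ≫ β)

/-- On generalized elements, `(b₁, b₂, a) ↦ (b₂, α a)`, where `β b₁ = β b₂` and `b₁ = f a`. -/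
noncomputable def kernelPairComparison : pullback (pullback.fst β β) f ⟶ pullback β f' :=
  pullback.lift (pullback.fst _ _ ≫ pullback.snd β β) (pullback.snd _ _ ≫ α) (by
    rw [Category.assoc, ← pullback.condition, pullback.condition_assoc, Category.assoc, w])

@[simp]
theorem kernelPairComparison_fst :
    kernelPairComparison f f' α β w ≫ pullback.fst β f' = pullback.fst _ _ ≫ pullback.snd β β :=
  pullback.lift_fst _ _ _

@[simp]
theorem kernelPairComparison_snd :
    kernelPairComparison f f' α β w ≫ pullback.snd β f' = pullback.snd _ _ ≫ α :=
  pullback.lift_snd _ _ _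

theorem strongEpi_kernelPairComparison [Regular C] [CategoryTheory.IsRegularEpi α] :
    StrongEpi (kernelPairComparison f f' α β w) := by
  let ρ := pullback.snd α (pullback.snd β f')
  -- `(a, (b, a')) ↦ (f a, b, a)`
  let j : pullback α (pullback.snd β f') ⟶ pullback (pullback.fst β β) f :=
    pullback.lift
      (pullback.lift (pullback.fst _ _ ≫ f) (ρ ≫ pullback.fst β f') (by
        simp only [Category.assoc]
        rw [← w, pullback.condition_assoc, ← pullback.condition]))
      (pullback.fst _ _) (pullback.lift_fst _ _ _)
  have hj : j ≫ kernelPairComparison f f' α β w = ρ := by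
    ext
    · rw [Category.assoc, kernelPairComparison_fst, pullback.lift_fst_assoc, pullback.lift_snd]
    · rw [Category.assoc, kernelPairComparison_snd, pullback.lift_snd_assoc, pullback.condition]
  have : StrongEpi (j ≫ kernelPairComparison f f' α β w) := by rw [hj]; infer_instance
  exact strongEpi_of_strongEpi j _

end KernelPairComparison

theorem extremalEpi_pullbackLift_of_isStablyStrongPoint [Regular C] {A B A' B' : C}
    {f : A ⟶ B} {s : B ⟶ A} {hs : s ≫ f = 𝟙 B} {f' : A' ⟶ B'} {s' : B' ⟶ A'}
    {α : A ⟶ A'} {β : B ⟶ B'} [CategoryTheory.IsRegularEpi α]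
    (w₁ : α ≫ f' = f ≫ β) (w₂ : s ≫ α = β ≫ s') (h : IsStablyStrongPoint f s hs) :
    ExtremalEpi (pullback.lift f α w₁.symm) := by
  refine ExtremalEpi.mk_of_hasEqualizers _ fun M u m hum _ => ?_
  let Δ : B ⟶ pullback β β := pullback.lift (𝟙 B) (𝟙 B) rfl
  have hfac : ∃ l, l ≫ m = kernelPairComparison f f' α β w₁ := by
    refine (h (pullback.fst β β) Δ).exists_lift_of_factors _ m
      ⟨pullback.snd Δ _ ≫ pullback.snd _ _ ≫ u, ?_⟩ ⟨pullback.snd β β ≫ s ≫ u, ?_⟩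
    all_goals
      simp only [Category.assoc, hum]
      ext <;> simp only [Category.assoc, pullback.lift_fst, pullback.lift_snd,
        kernelPairComparison_fst, kernelPairComparison_snd]
    · rw [← pullback.condition, ← pullback.condition_assoc, ← pullback.condition_assoc]
      simp only [Δ, pullback.lift_fst, pullback.lift_snd]
    · rw [pullback.lift_fst_assoc, hs, Category.comp_id, Category.id_comp]
    · rw [pullback.lift_snd_assoc, Category.assoc, w₂, pullback.condition_assoc]
  obtain ⟨l, hl⟩ := hfac
  have := strongEpi_kernelPairComparison f f' α β w₁
  exact ExtremalEpi.isIso _ l m hl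

/-- In a regular category, a regular epimorphism of points whose domain point
is stably strong is a regular pushout. -/
theorem statement9 [HasFiniteLimits C]
    (hcoeq : ∀ {X Y : C} (f : X ⟶ Y),
      HasCoequalizer (pullback.fst f f) (pullback.snd f f))
    (hstab : ∀ {X Y Z : C} (f : X ⟶ Z) (g : Y ⟶ Z),
      _root_.IsRegularEpi f → _root_.IsRegularEpi (pullback.snd f g))
    {A B A' B' : C}
    (f : A ⟶ B) (s : B ⟶ A) (hs : s ≫ f = 𝟙 B)
    (f' : A' ⟶ B') (s' : B' ⟶ A') (hs' : s' ≫ f' = 𝟙 B')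
    (α : A ⟶ A') (β : B ⟶ B') (hα : _root_.IsRegularEpi α) (hβ : _root_.IsRegularEpi β)
    (w1 : α ≫ f' = f ≫ β) (w2 : s ≫ α = β ≫ s')
    (h : IsStablyStrongPoint f s hs) :
    IsRegularPushout α f f' β w1.symm := by
  have : Regular C := regular_of_isRegularEpi_pullback_snd hcoeq hstab
  have : CategoryTheory.IsRegularEpi α := ⟨hα⟩
  have := extremalEpi_pullbackLift_of_isStablyStrongPoint w1 w2 h
  have : IsSplitEpi f := .mk' ⟨s, hs⟩
  have : IsSplitEpi f' := .mk' ⟨s', hs'⟩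
  exact ⟨hα, hβ, ⟨.ofSplitEpi f⟩, ⟨.ofSplitEpi f'⟩,
    (Regular.isRegularEpi_of_extremalEpi _).regularEpi⟩
end

section
/- Let C be a pointed finitely complete category and Y an object of C. The following conditions are equivalent: (i) Y is a strongly unital object; (ii) for every morphism f : X → Y, the point (π_X : X × Y → X, ⟨1_X, f⟩ : X → X × Y) is stably strong; (iii) for every morphism f : X → Y, the point (π_X : X × Y → X, ⟨1_X, f⟩ : X → X × Y) is strong; (iv) for every split right punctual span (s : X → Z, f : Z → X, g : Z → Y, t : Y → Z), the morphism ⟨f, g⟩ : Z → X × Y is a strong epimorphism. -/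
open CategoryTheory CategoryTheory.Limits

universe v u

variable {C : Type u} [Category.{v} C]

/-!
In a pointed category every pullback of a point `(p, s)` contains the kernel of `p`, and the
pullback along `0` is essentially that kernel, so `(p, s)` is strong exactly when `ker p` and `s`
are jointly strongly epimorphic. The kernel of `π_X : X × Y ⟶ X` is `⟨0, 1⟩ : Y ⟶ X × Y`, and the
pullback of `(π_X, ⟨1, f⟩)` along `g : W ⟶ X` is `(π_W, ⟨1, g ≫ f⟩)`; hence (i)–(iii) all say that
`⟨0, 1⟩` and `⟨1, f⟩` are jointly strongly epimorphic for every `f : X ⟶ Y`. For a split right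
punctual span `(s, f, g, t)`, the comparison `⟨f, g⟩` contains `⟨0, 1⟩ = t ≫ ⟨f, g⟩` and
`⟨1, s ≫ g⟩ = s ≫ ⟨f, g⟩`, which gives (iv). Conversely, a monomorphism `m` containing `⟨0, 1⟩`
via `t'` and `⟨1, f⟩` via `s'` is the comparison of the split right punctual span
`(s', m ≫ π_X, m ≫ π_Y, t')`, so it is a strong epimorphism and thus an isomorphism.
-/

attribute [local simp] prod.lift_fst prod.lift_snd prod.lift_fst_assoc prod.lift_snd_assoc
  pullback.lift_fst pullback.lift_snd pullback.lift_fst_assoc pullback.lift_snd_assoc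

namespace JointlyStronglyEpi

variable {X X' Y A A' : C} {r : X ⟶ A} {s : Y ⟶ A}

lemma of_comp_left {a : X' ⟶ X} (h : JointlyStronglyEpi (a ≫ r) s) :
    JointlyStronglyEpi r s := by
  rintro M m hm ⟨r', rfl⟩ hs
  exact h m hm ⟨a ≫ r', Category.assoc _ _ _⟩ hs

lemma comp_isIso (h : JointlyStronglyEpi r s) (i : A ⟶ A') [IsIso i] :
    JointlyStronglyEpi (r ≫ i) (s ≫ i) := by
  rintro M m hm ⟨r', hr'⟩ ⟨s', hs'⟩
  have : IsIso (m ≫ inv i) :=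
    h (m ≫ inv i) inferInstance ⟨r', by simp [reassoc_of% hr']⟩ ⟨s', by simp [reassoc_of% hs']⟩
  exact IsIso.of_isIso_comp_right m (inv i)

end JointlyStronglyEpi

section StrongPoint

variable [HasPullbacks C] [HasZeroMorphisms C] {A B : C} {p : A ⟶ B} {s : B ⟶ A}

lemma isStrongPoint_of_jointlyStronglyEpi {K : C} {u : K ⟶ A} (hu : u ≫ p = 0)
    (h : JointlyStronglyEpi u s) : IsStrongPoint p s := fun _ g =>
  JointlyStronglyEpi.of_comp_left (a := pullback.lift 0 u (by simp [hu]))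
    (by rwa [pullback.lift_snd])

lemma isStrongPoint_iff_jointlyStronglyEpi {c : KernelFork p} (hc : IsLimit c) :
    IsStrongPoint p s ↔ JointlyStronglyEpi c.ι s := by
  refine ⟨fun h => ?_, isStrongPoint_of_jointlyStronglyEpi c.condition⟩
  obtain ⟨l, hl⟩ := KernelFork.IsLimit.lift' hc (pullback.snd (0 : c.pt ⟶ B) p)
    (by simp [← pullback.condition])
  exact JointlyStronglyEpi.of_comp_left (hl ▸ h 0)

lemma IsStrongPoint.of_iso [HasKernels C] {A' : C} {p' : A' ⟶ B} {s' : B ⟶ A'}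
    (h : IsStrongPoint p s) (e : A ≅ A') (hp : e.hom ≫ p' = p) (hs : s ≫ e.hom = s') :
    IsStrongPoint p' s' :=
  isStrongPoint_of_jointlyStronglyEpi (u := kernel.ι p ≫ e.hom) (by simp [hp])
    (hs ▸ ((isStrongPoint_iff_jointlyStronglyEpi (kernelIsKernel p)).mp h).comp_isIso e.hom)

end StrongPoint

section ProductPoint

variable [HasZeroMorphisms C]

noncomputable def prod.isKernelInr (X Y : C) [HasBinaryProduct X Y] :
    IsLimit (KernelFork.ofι (prod.inr X Y) (prod.inr_fst X Y)) :=
  KernelFork.IsLimit.ofι _ _ (fun k _ => k ≫ prod.snd)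
    (fun k hk => by ext <;> simp [hk])
    (fun k _ l hl => by simp [← hl])

variable [HasFiniteLimits C] {W X Y : C}

lemma isStrongPoint_prodFst_iff (s : X ⟶ X ⨯ Y) :
    IsStrongPoint (prod.fst : X ⨯ Y ⟶ X) s ↔ JointlyStronglyEpi (prod.inr X Y) s :=
  isStrongPoint_iff_jointlyStronglyEpi (prod.isKernelInr X Y)

lemma isStrongPoint_pullback_prodFst_iff (g : W ⟶ X) (f : X ⟶ Y) :
    IsStrongPoint (pullback.fst g (prod.fst : X ⨯ Y ⟶ X))
        (pullback.lift (𝟙 W) (g ≫ prod.lift (𝟙 X) f) (by simp)) ↔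
      IsStrongPoint (prod.fst : W ⨯ Y ⟶ W) (prod.lift (𝟙 W) (g ≫ f)) := by
  let e := pullbackProdFstIsoProd g Y
  have hs : pullback.lift (𝟙 W) (g ≫ prod.lift (𝟙 X) f) (by simp) ≫ e.hom =
      prod.lift (𝟙 W) (g ≫ f) := by
    ext <;> simp [e]
  exact ⟨fun h => h.of_iso e (by simp [e]) hs,
    fun h => h.of_iso e.symm (by simp [e]) (by rw [← hs, Iso.symm_hom, Category.assoc, Iso.hom_inv_id, Category.comp_id])⟩

lemma strongEpi_prod_lift_of_jointlyStronglyEpi {Z : C} {s : X ⟶ Z} {f : Z ⟶ X} {g : Z ⟶ Y}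
    {t : Y ⟶ Z} (h : JointlyStronglyEpi (prod.inr X Y) (prod.lift (𝟙 X) (s ≫ g)))
    (hsf : s ≫ f = 𝟙 X) (htg : t ≫ g = 𝟙 Y) (htf : t ≫ f = 0) :
    StrongEpi (prod.lift f g) := by
  refine (extremalEpi_iff_strongEpi_of_hasPullbacks _).mp
    (ExtremalEpi.mk_of_hasEqualizers _ fun M e m he _ => h m inferInstance ⟨t ≫ e, ?_⟩ ⟨s ≫ e, ?_⟩)
  · ext <;> simp [he, htf, htg]
  · ext <;> simp [he, hsf]

lemma jointlyStronglyEpi_prod_inr_of_forall_strongEpi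
    (h : ∀ ⦃X Z : C⦄ (s : X ⟶ Z) (f : Z ⟶ X) (g : Z ⟶ Y) (t : Y ⟶ Z),
      s ≫ f = 𝟙 X → t ≫ g = 𝟙 Y → t ≫ f = 0 → StrongEpi (prod.lift f g))
    (f : X ⟶ Y) : JointlyStronglyEpi (prod.inr X Y) (prod.lift (𝟙 X) f) := by
  rintro M m hm ⟨t, ht⟩ ⟨s, hs⟩
  have : StrongEpi (prod.lift (m ≫ prod.fst) (m ≫ prod.snd)) :=
    h s _ _ t (by simp [reassoc_of% hs]) (by simp [reassoc_of% ht]) (by simp [reassoc_of% ht])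
  rw [← prod.comp_lift, prod.lift_fst_snd, Category.comp_id] at this
  exact isIso_of_mono_of_strongEpi m

end ProductPoint

theorem statement10_general [HasFiniteLimits C] [HasZeroMorphisms C]
    (Y : C) :
    List.TFAE [StronglyUnitalObject Y,
      ∀ ⦃X : C⦄ (f : X ⟶ Y),
        IsStablyStrongPoint (prod.fst : X ⨯ Y ⟶ X) (prod.lift (𝟙 X) f) (prod.lift_fst _ _),
      ∀ ⦃X : C⦄ (f : X ⟶ Y),
        IsStrongPoint (prod.fst : X ⨯ Y ⟶ X) (prod.lift (𝟙 X) f),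
      ∀ ⦃X Z : C⦄ (s : X ⟶ Z) (f : Z ⟶ X) (g : Z ⟶ Y) (t : Y ⟶ Z),
        s ≫ f = 𝟙 X → t ≫ g = 𝟙 Y → t ≫ f = 0 →
        StrongEpi (prod.lift f g : Z ⟶ X ⨯ Y)] := by
  tfae_have 1 → 3 := fun h _ g => by
    simpa using (isStrongPoint_pullback_prodFst_iff g (𝟙 Y)).mp (h g)
  tfae_have 3 → 2 := fun h _ f _ g => (isStrongPoint_pullback_prodFst_iff g f).mpr (h (g ≫ f))
  tfae_have 2 → 1 := fun h => h (𝟙 Y)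
  tfae_have 3 → 4 := fun h _ _ s _ g _ hsf htg htf =>
    strongEpi_prod_lift_of_jointlyStronglyEpi ((isStrongPoint_prodFst_iff _).mp (h (s ≫ g)))
      hsf htg htf
  tfae_have 4 → 3 := fun h _ f =>
    (isStrongPoint_prodFst_iff _).mpr (jointlyStronglyEpi_prod_inr_of_forall_strongEpi h f)
  tfae_finish

/-- In a pointed finitely complete category, TFAE for an object `Y`:
(i) `Y` is strongly unital; (ii) for every `f : X ⟶ Y` the point
`(π_X, ⟨1_X, f⟩)` is stably strong; (iii) for every `f : X ⟶ Y` the point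
`(π_X, ⟨1_X, f⟩)` is strong; (iv) for every split right punctual span the
comparison `⟨f, g⟩` is a strong epimorphism. -/
theorem statement10 [HasFiniteLimits C] [HasZeroObject C] [HasZeroMorphisms C]
    (Y : C) :
    List.TFAE [StronglyUnitalObject Y,
      ∀ ⦃X : C⦄ (f : X ⟶ Y),
        IsStablyStrongPoint (prod.fst : X ⨯ Y ⟶ X) (prod.lift (𝟙 X) f) (prod.lift_fst _ _),
      ∀ ⦃X : C⦄ (f : X ⟶ Y),
        IsStrongPoint (prod.fst : X ⨯ Y ⟶ X) (prod.lift (𝟙 X) f),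
      ∀ ⦃X Z : C⦄ (s : X ⟶ Z) (f : Z ⟶ X) (g : Z ⟶ Y) (t : Y ⟶ Z),
        s ≫ f = 𝟙 X → t ≫ g = 𝟙 Y → t ≫ f = 0 →
        StrongEpi (prod.lift f g : Z ⟶ X ⨯ Y)] :=
  statement10_general Y
end

section
/- In a pointed regular category, an object Y is strongly unital if and only if Y is both unital and subtractive. -/
open CategoryTheory CategoryTheory.Limits

universe v u

variable {C : Type u} [Category.{v} C]

/-!
Both conditions are read on products: `Y` is strongly unital iff for all `g : X ⟶ Y` and
`h : W ⟶ X` the pair `(h × 1_Y, ⟨1_X, g⟩)` is jointly strongly epimorphic into `X ⨯ Y`, and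
unital iff this holds for `g = 0`.

Given a split right punctual span `(s, f, g, t)` over a strongly unital `Y`, both `t × 1_Y` and
`⟨1_Z, g⟩` factor through `⟨p₁, p₂ ≫ g⟩ : Z ×_X Z ⟶ Z ⨯ Y`, which is therefore an extremal, hence
regular, epimorphism; its pullback along `⟨s, 0⟩` is `ker g ≫ f`.

Conversely, let a monomorphism `m : M ⟶ X ⨯ Y` receive `h × 1_Y` and `⟨1_X, g⟩`. Then
`m ≫ π₁` and `m ≫ π₂`, split by the maps induced by `⟨1_X, g⟩` and `⟨0, 1_Y⟩`, form a split right
punctual span, so `ker (m ≫ π₂) ≫ m ≫ π₁` is a regular epimorphism. Lifting it against `m` factors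
`⟨1_X, 0⟩` through `m`, and unitality applies.
-/

attribute [local simp] prod.lift_fst prod.lift_snd prod.lift_fst_assoc prod.lift_snd_assoc
  pullback.lift_fst pullback.lift_snd pullback.lift_fst_assoc pullback.lift_snd_assoc

theorem CategoryTheory.Regular.of_hasCoequalizer_of_isRegularEpi_pullbackSnd [HasFiniteLimits C]
    (hcoeq : ∀ {X Y : C} (f : X ⟶ Y), HasCoequalizer (pullback.fst f f) (pullback.snd f f))
    (hstab : ∀ {X Y Z : C} (f : X ⟶ Z) (g : Y ⟶ Z),
      _root_.IsRegularEpi f → _root_.IsRegularEpi (pullback.snd f g)) :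
    Regular C where
  hasCoequalizer_of_isKernelPair {_ _ _ f _ _} k :=
    have := hcoeq f
    hasColimit_of_iso (F := parallelPair (pullback.fst f f) (pullback.snd f f))
      (parallelPair.ext k.isoPullback (Iso.refl _) (by simp) (by simp))
  regularEpiIsStableUnderBaseChange :=
    .of_forall_exists_isPullback fun f g _ hg =>
      ⟨_, _, _, (IsPullback.of_hasPullback g f).flip, ⟨hstab g f hg.regularEpi⟩⟩

theorem JointlyStronglyEpi.of_factors_comp_iso {X Y X' Y' A A' : C} {r : X ⟶ A} {s : Y ⟶ A}
    (h : JointlyStronglyEpi r s) (e : A ≅ A') {r' : X' ⟶ A'} {s' : Y' ⟶ A'}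
    (a : X ⟶ X') (b : Y ⟶ Y') (hr : a ≫ r' = r ≫ e.hom) (hs : b ≫ s' = s ≫ e.hom) :
    JointlyStronglyEpi r' s' := by
  rintro M m hm ⟨r'', rfl⟩ ⟨s'', rfl⟩
  have : IsIso (m ≫ e.inv) :=
    h _ (mono_comp m e.inv) ⟨a ≫ r'', by simp [reassoc_of% hr]⟩
      ⟨b ≫ s'', by simp [reassoc_of% hs]⟩
  exact IsIso.of_isIso_comp_right m e.inv

section ProductForm

variable [HasPullbacks C] [HasBinaryProducts C]

noncomputable def pullbackProdFstIso {X Y : C} (g : X ⟶ Y) :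
    pullback g (prod.fst : Y ⨯ Y ⟶ Y) ≅ X ⨯ Y where
  hom := prod.lift (pullback.fst _ _) (pullback.snd _ _ ≫ prod.snd)
  inv := pullback.lift prod.fst (prod.lift (prod.fst ≫ g) prod.snd) (by simp)
  hom_inv_id := by ext <;> simp [pullback.condition]

theorem jointlyStronglyEpi_pullbackSnd_pullbackFst_prodFst_iff {X Y W : C} (g : X ⟶ Y)
    (h : W ⟶ X) (σ : Y ⟶ Y ⨯ Y) (hσ : σ ≫ prod.fst = 𝟙 Y) :
    JointlyStronglyEpi (pullback.snd h (pullback.fst g (prod.fst : Y ⨯ Y ⟶ Y)))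
        (pullback.lift (𝟙 X) (g ≫ σ) (by simp [hσ])) ↔
      JointlyStronglyEpi (prod.map h (𝟙 Y)) (prod.lift (𝟙 X) (g ≫ σ ≫ prod.snd)) := by
  constructor <;> intro hJ
  · refine hJ.of_factors_comp_iso (pullbackProdFstIso g)
      (prod.lift (pullback.fst _ _) (pullback.snd _ _ ≫ pullback.snd _ _ ≫ prod.snd)) (𝟙 _)
      ?_ ?_ <;> ext <;> simp [pullbackProdFstIso, pullback.condition]
  · refine hJ.of_factors_comp_iso (pullbackProdFstIso g).symm
      (pullback.lift prod.fst (prod.map h (𝟙 Y) ≫ (pullbackProdFstIso g).inv)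
        (by simp [pullbackProdFstIso]))
      (𝟙 _) ?_ ?_ <;> ext <;> simp [pullbackProdFstIso, hσ]

theorem isStablyStrongPoint_prodFst_iff {Y : C} (σ : Y ⟶ Y ⨯ Y) (hσ : σ ≫ prod.fst = 𝟙 Y) :
    IsStablyStrongPoint prod.fst σ hσ ↔ ∀ ⦃X : C⦄ (g : X ⟶ Y) ⦃W : C⦄ (h : W ⟶ X),
      JointlyStronglyEpi (prod.map h (𝟙 Y)) (prod.lift (𝟙 X) (g ≫ σ ≫ prod.snd)) :=
  forall₂_congr fun _ g => forall₂_congr fun _ h =>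
    jointlyStronglyEpi_pullbackSnd_pullbackFst_prodFst_iff g h σ hσ

theorem stronglyUnitalObject_iff (Y : C) :
    StronglyUnitalObject Y ↔ ∀ ⦃X : C⦄ (g : X ⟶ Y) ⦃W : C⦄ (h : W ⟶ X),
      JointlyStronglyEpi (prod.map h (𝟙 Y)) (prod.lift (𝟙 X) g) := by
  simpa [StronglyUnitalObject] using
    isStablyStrongPoint_prodFst_iff (prod.lift (𝟙 Y) (𝟙 Y)) (prod.lift_fst _ _)

theorem unitalObject_iff [HasZeroMorphisms C] (Y : C) :
    UnitalObject Y ↔ ∀ ⦃X W : C⦄ (h : W ⟶ X),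
      JointlyStronglyEpi (prod.map h (𝟙 Y)) (prod.lift (𝟙 X) (0 : X ⟶ Y)) := by
  simpa [UnitalObject] using
    isStablyStrongPoint_prodFst_iff (prod.lift (𝟙 Y) 0) (prod.lift_fst _ _)

theorem unitalObject_of_stronglyUnitalObject [HasZeroMorphisms C] {Y : C}
    (hY : StronglyUnitalObject Y) : UnitalObject Y :=
  (unitalObject_iff Y).2 fun _ _ h => (stronglyUnitalObject_iff Y).1 hY 0 h

theorem stronglyUnitalObject_of_unitalObject_of_subtractiveObject [HasZeroMorphisms C]
    [HasKernels C] {Y : C} (hU : UnitalObject Y) (hS : SubtractiveObject Y) :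
    StronglyUnitalObject Y := by
  rw [stronglyUnitalObject_iff]
  rintro X g W h M m hm ⟨a, ha⟩ ⟨b, hb⟩
  have ht : (prod.lift 0 (𝟙 Y) ≫ a) ≫ m = prod.lift 0 (𝟙 Y) := by ext <;> simp [ha]
  have : CategoryTheory.IsRegularEpi (kernel.ι (m ≫ prod.snd) ≫ m ≫ prod.fst) :=
    ⟨hS b (m ≫ prod.fst) (m ≫ prod.snd) (prod.lift 0 (𝟙 Y) ≫ a)
      (by simp [reassoc_of% hb]) (by simp [reassoc_of% ht]) (by simp [reassoc_of% ht])⟩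
  have sq : CommSq (kernel.ι (m ≫ prod.snd)) (kernel.ι (m ≫ prod.snd) ≫ m ≫ prod.fst) m
      (prod.lift (𝟙 X) 0) := ⟨by ext <;> simp [kernel.condition]⟩
  exact (unitalObject_iff Y).1 hU h m hm ⟨a, ha⟩ ⟨sq.lift, sq.fac_right⟩

end ProductForm

section KernelPair

variable [HasFiniteLimits C] [HasZeroMorphisms C]

theorem isPullback_kernelι_comp {X Y Z : C} {s : X ⟶ Z} {f : Z ⟶ X} (hsf : s ≫ f = 𝟙 X)
    (g : Z ⟶ Y) :
    IsPullback (pullback.lift (kernel.ι g ≫ f ≫ s) (kernel.ι g) (by simp [hsf]))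
      (kernel.ι g ≫ f) (prod.lift (pullback.fst f f) (pullback.snd f f ≫ g)) (prod.lift s 0) := by
  refine .of_isLimit' ⟨by ext <;> simp⟩ (PullbackCone.IsLimit.mk _
    (fun c => kernel.lift g (c.fst ≫ pullback.snd f f) ?ker) (fun c => ?left) (fun c => ?right)
    (fun c m hm _ => ?uniq))
  all_goals
    have hfst : c.fst ≫ pullback.fst f f = c.snd ≫ s := by simpa using c.condition =≫ prod.fst
    have hsnd : c.fst ≫ pullback.snd f f ≫ f = c.snd := by
      rw [← pullback.condition, reassoc_of% hfst, hsf, Category.comp_id]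
  case ker => simpa using c.condition =≫ prod.snd
  case left => ext <;> simp [reassoc_of% hsnd, hfst]
  case right => simp [hsnd]
  case uniq => ext; simp [← hm]

theorem extremalEpi_kernelPair_prodLift {X Y Z : C} {f : Z ⟶ X} {g : Z ⟶ Y} {t : Y ⟶ Z}
    (htg : t ≫ g = 𝟙 Y) (htf : t ≫ f = 0)
    (hY : JointlyStronglyEpi (prod.map t (𝟙 Y)) (prod.lift (𝟙 Z) g)) :
    ExtremalEpi (prod.lift (pullback.fst f f) (pullback.snd f f ≫ g)) :=
  .mk_of_hasEqualizers _ fun _ p i hpi _ =>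
    hY i inferInstance
      ⟨pullback.lift (prod.fst ≫ t) (prod.snd ≫ t) (by simp [htf]) ≫ p, by ext <;> simp [hpi, htg]⟩
      ⟨pullback.lift (𝟙 Z) (𝟙 Z) rfl ≫ p, by ext <;> simp [hpi]⟩

end KernelPair

theorem subtractiveObject_of_stronglyUnitalObject [Regular C] [HasZeroMorphisms C] {Y : C}
    (hY : StronglyUnitalObject Y) : SubtractiveObject Y := by
  intro X Z s f g t hsf htg htf
  have := extremalEpi_kernelPair_prodLift htg htf ((stronglyUnitalObject_iff Y).1 hY g t)
  exact (Regular.regularEpiIsStableUnderBaseChange.of_isPullback (isPullback_kernelι_comp hsf g)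
    ((MorphismProperty.regularEpi_iff _).2 inferInstance)).regularEpi

theorem statement14_general [HasFiniteLimits C] [HasZeroMorphisms C]
    (hcoeq : ∀ {X Y : C} (f : X ⟶ Y),
      HasCoequalizer (pullback.fst f f) (pullback.snd f f))
    (hstab : ∀ {X Y Z : C} (f : X ⟶ Z) (g : Y ⟶ Z),
      _root_.IsRegularEpi f → _root_.IsRegularEpi (pullback.snd f g))
    (Y : C) :
    StronglyUnitalObject Y ↔ UnitalObject Y ∧ SubtractiveObject Y := by
  have : Regular C := .of_hasCoequalizer_of_isRegularEpi_pullbackSnd hcoeq hstab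
  exact ⟨fun hY => ⟨unitalObject_of_stronglyUnitalObject hY,
      subtractiveObject_of_stronglyUnitalObject hY⟩,
    fun ⟨hU, hS⟩ => stronglyUnitalObject_of_unitalObject_of_subtractiveObject hU hS⟩

/-- In a pointed regular category, an object is strongly unital iff it is
unital and subtractive. -/
theorem statement14 [HasFiniteLimits C] [HasZeroObject C] [HasZeroMorphisms C]
    (hcoeq : ∀ {X Y : C} (f : X ⟶ Y),
      HasCoequalizer (pullback.fst f f) (pullback.snd f f))
    (hstab : ∀ {X Y Z : C} (f : X ⟶ Z) (g : Y ⟶ Z),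
      _root_.IsRegularEpi f → _root_.IsRegularEpi (pullback.snd f g))
    (Y : C) :
    StronglyUnitalObject Y ↔ UnitalObject Y ∧ SubtractiveObject Y :=
  statement14_general hcoeq hstab Y
end

section
/- Let C be a regular category and Y an object of C. The following conditions are equivalent: (i) Y is a Mal'tsev object; (ii) every double split epimorphism (f' : D → C, s'), (g' : D → A, t'), (f : A → Y, s), (g : C → Y, t) over Y is a regular pushout, i.e. the comparison morphism ⟨g', f'⟩ : D → A ×_Y C into the pullback of f and g is a regular epimorphism; (iii) every double split epimorphism over Y in which f' and g' are jointly monomorphic is a pullback square. -/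
open CategoryTheory CategoryTheory.Limits

universe v u

variable {C : Type u} [Category.{v} C]

/-! (i) ⇒ (ii): the comparison `D ⟶ A ×_Y C` of a double split epimorphism lifts both canonical
sections of `A ×_Y C`, so the mono part of its (regular epi, mono) factorisation contains both
sections and is an isomorphism. (ii) ⇒ (iii): if `f'` and `g'` are jointly monic, the comparison
is moreover a mono, hence an isomorphism. (iii) ⇒ (i): a subobject `M ↣ A ×_Y C` containing both
sections is itself a double split epimorphism over `Y` whose legs are jointly monic, hence a
pullback, so it is all of `A ×_Y C`. -/

namespace CategoryTheory

noncomputable abbrev Regular.ofKernelPairCoequalizers [HasFiniteLimits C]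
    (hcoeq : ∀ {X Y : C} (f : X ⟶ Y),
      HasCoequalizer (pullback.fst f f) (pullback.snd f f))
    (hstab : ∀ {X Y Z : C} (f : X ⟶ Z) (g : Y ⟶ Z),
      _root_.IsRegularEpi f → _root_.IsRegularEpi (pullback.snd f g)) :
    Regular C where
  hasCoequalizer_of_isKernelPair {_ _ _ f g₁ g₂} h :=
    have := hcoeq f
    hasColimit_of_iso (parallelPair.ext h.isoPullback (Iso.refl _) :
      parallelPair g₁ g₂ ≅ parallelPair (pullback.fst f f) (pullback.snd f f))
  regularEpiIsStableUnderBaseChange := .mk' fun _ _ _ f g _ hg => by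
    rw [← pullbackSymmetry_hom_comp_snd]
    exact (MorphismProperty.regularEpi C).cancel_left_of_respectsIso _ _ |>.mpr
      ⟨hstab g f hg.regularEpi⟩

attribute [local simp] pullback.lift_fst pullback.lift_snd pullback.lift_fst_assoc
  pullback.lift_snd_assoc

lemma isRegularEpi_of_jointlyStronglyEpi [Regular C] {X X' D P : C} {r : X ⟶ P} {r' : X' ⟶ P}
    (hrr' : JointlyStronglyEpi r r') (φ : D ⟶ P) {u : X ⟶ D} {u' : X' ⟶ D}
    (hu : u ≫ φ = r) (hu' : u' ≫ φ = r') : IsRegularEpi φ := by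
  let F := Regular.strongEpiMonoFactorisation φ
  have : IsIso F.m := hrr' F.m F.m_mono ⟨u ≫ F.e, by simp [hu]⟩ ⟨u' ≫ F.e, by simp [hu']⟩
  rw [← F.fac]
  exact MorphismProperty.RespectsIso.postcomp (.regularEpi C) F.m F.e
    (inferInstance : IsRegularEpi F.e)

lemma mono_pullback_lift_of_mono_prod_lift [HasPullbacks C] [HasBinaryProducts C]
    {D A B Y : C} {f : A ⟶ Y} {g : B ⟶ Y} {a : D ⟶ A} {b : D ⟶ B} (w : a ≫ f = b ≫ g)
    [Mono (prod.lift a b)] : Mono (pullback.lift a b w) :=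
  mono_of_mono_fac (f := prod.lift (pullback.fst f g) (pullback.snd f g)) (h := prod.lift a b)
    (by ext <;> simp)

lemma isIso_of_isPullback_comp_fst_comp_snd [HasPullbacks C] {M A B Y : C} {f : A ⟶ Y} {g : B ⟶ Y}
    (m : M ⟶ pullback f g)
    (h : IsPullback (m ≫ pullback.fst f g) (m ≫ pullback.snd f g) f g) : IsIso m := by
  convert (inferInstance : IsIso h.isoPullback.hom)
  ext <;> simp

structure IsDoubleSplitEpi {D A B Y : C} (f' : D ⟶ B) (s' : B ⟶ D) (g' : D ⟶ A) (t' : A ⟶ D)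
    (f : A ⟶ Y) (s : Y ⟶ A) (g : B ⟶ Y) (t : Y ⟶ B) : Prop where
  split_f' : s' ≫ f' = 𝟙 B
  split_g' : t' ≫ g' = 𝟙 A
  split_f : s ≫ f = 𝟙 Y
  split_g : t ≫ g = 𝟙 Y
  comm : f' ≫ g = g' ≫ f
  s'_g' : s' ≫ g' = g ≫ s
  t'_f' : t' ≫ f' = f ≫ t
  t_s' : t ≫ s' = s ≫ t'

namespace IsDoubleSplitEpi

variable {D A B Y : C} {f' : D ⟶ B} {s' : B ⟶ D} {g' : D ⟶ A} {t' : A ⟶ D}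
  {f : A ⟶ Y} {s : Y ⟶ A} {g : B ⟶ Y} {t : Y ⟶ B}

lemma isRegularEpi_pullback_lift [Regular C] (hY : IsMaltsevObject Y)
    (h : IsDoubleSplitEpi f' s' g' t' f s g t) :
    IsRegularEpi (pullback.lift g' f' h.comm.symm) :=
  isRegularEpi_of_jointlyStronglyEpi (hY f s g t h.split_f h.split_g)
    (pullback.lift g' f' h.comm.symm) (u := t') (u' := s') (by ext <;> simp [h.split_g', h.t'_f'])
    (by ext <;> simp [h.split_f', h.s'_g'])

lemma isPullback_of_isRegularEpi [HasPullbacks C] [HasBinaryProducts C]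
    (h : IsDoubleSplitEpi f' s' g' t' f s g t)
    (hreg : IsRegularEpi (pullback.lift g' f' h.comm.symm)) [Mono (prod.lift g' f')] :
    IsPullback g' f' f g := by
  have := mono_pullback_lift_of_mono_prod_lift h.comm.symm
  have := isIso_of_regularEpi_of_mono _ hreg.regularEpi.some
  exact .of_iso_pullback ⟨h.comm.symm⟩ (asIso (pullback.lift g' f' h.comm.symm)) (by simp)
    (by simp)

lemma of_mono_of_factor_sections [HasPullbacks C] {M : C} {m : M ⟶ pullback f g} [Mono m]
    {u : A ⟶ M} {u' : B ⟶ M} (hs : s ≫ f = 𝟙 Y) (ht : t ≫ g = 𝟙 Y)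
    (hu : u ≫ m = (pullback.lift (𝟙 A) (f ≫ t) (by simp [ht]) : A ⟶ pullback f g))
    (hu' : u' ≫ m = (pullback.lift (g ≫ s) (𝟙 B) (by simp [hs]) : B ⟶ pullback f g)) :
    IsDoubleSplitEpi (m ≫ pullback.snd f g) u' (m ≫ pullback.fst f g) u f s g t where
  split_f' := by simp [reassoc_of% hu']
  split_g' := by simp [reassoc_of% hu]
  split_f := hs
  split_g := ht
  comm := by simp [pullback.condition]
  s'_g' := by simp [reassoc_of% hu']
  t'_f' := by simp [reassoc_of% hu]
  t_s' := by
    rw [← cancel_mono m]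
    ext <;> simp [reassoc_of% hu, reassoc_of% hu', reassoc_of% hs, reassoc_of% ht]

end IsDoubleSplitEpi

end CategoryTheory

/-- In a regular category, TFAE for an object `Y`: (i) `Y` is a Mal'tsev
object; (ii) every double split epimorphism over `Y` is a regular pushout,
i.e. the comparison morphism into the pullback is a regular epimorphism;
(iii) every double split epimorphism over `Y` whose top morphisms are jointly
monomorphic is a pullback. -/
theorem statement16 [HasFiniteLimits C]
    (hcoeq : ∀ {X Y : C} (f : X ⟶ Y),
      HasCoequalizer (pullback.fst f f) (pullback.snd f f))
    (hstab : ∀ {X Y Z : C} (f : X ⟶ Z) (g : Y ⟶ Z),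
      _root_.IsRegularEpi f → _root_.IsRegularEpi (pullback.snd f g))
    (Y : C) :
    List.TFAE [IsMaltsevObject Y,
      ∀ ⦃D A Cc : C⦄
        (f' : D ⟶ Cc) (s' : Cc ⟶ D) (g' : D ⟶ A) (t' : A ⟶ D)
        (f : A ⟶ Y) (s : Y ⟶ A) (g : Cc ⟶ Y) (t : Y ⟶ Cc),
        s' ≫ f' = 𝟙 Cc → t' ≫ g' = 𝟙 A → s ≫ f = 𝟙 Y → t ≫ g = 𝟙 Y →
        ∀ (c1 : f' ≫ g = g' ≫ f), s' ≫ g' = g ≫ s → t' ≫ f' = f ≫ t →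
        t ≫ s' = s ≫ t' →
        _root_.IsRegularEpi (pullback.lift g' f' c1.symm : D ⟶ pullback f g),
      ∀ ⦃D A Cc : C⦄
        (f' : D ⟶ Cc) (s' : Cc ⟶ D) (g' : D ⟶ A) (t' : A ⟶ D)
        (f : A ⟶ Y) (s : Y ⟶ A) (g : Cc ⟶ Y) (t : Y ⟶ Cc),
        s' ≫ f' = 𝟙 Cc → t' ≫ g' = 𝟙 A → s ≫ f = 𝟙 Y → t ≫ g = 𝟙 Y →
        ∀ (c1 : f' ≫ g = g' ≫ f), s' ≫ g' = g ≫ s → t' ≫ f' = f ≫ t →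
        t ≫ s' = s ≫ t' →
        Mono (prod.lift g' f' : D ⟶ A ⨯ Cc) →
        Nonempty (IsLimit (PullbackCone.mk g' f' c1.symm))] := by
  let := Regular.ofKernelPairCoequalizers hcoeq hstab
  tfae_have 1 → 2 := fun hY _ _ _ _ _ _ _ _ _ _ _ hs' ht' hs ht c1 c2 c3 c4 =>
    (IsDoubleSplitEpi.mk hs' ht' hs ht c1 c2 c3 c4).isRegularEpi_pullback_lift hY |>.regularEpi
  tfae_have 2 → 3 := fun h _ _ _ _ _ _ _ _ _ _ _ hs' ht' hs ht c1 c2 c3 c4 _ =>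
    ((IsDoubleSplitEpi.mk hs' ht' hs ht c1 c2 c3 c4).isPullback_of_isRegularEpi
      ⟨h _ _ _ _ _ _ _ _ hs' ht' hs ht c1 c2 c3 c4⟩).isLimit'
  tfae_have 3 → 1 := by
    intro h A X f s g t hs ht M m _ ⟨u, hu⟩ ⟨u', hu'⟩
    have hD := IsDoubleSplitEpi.of_mono_of_factor_sections hs ht hu hu'
    have : Mono (prod.lift (m ≫ pullback.fst f g) (m ≫ pullback.snd f g)) := by
      rw [← prod.comp_lift]; infer_instance
    obtain ⟨hl⟩ := h _ _ _ _ _ _ _ _ hD.split_f' hD.split_g' hs ht hD.comm hD.s'_g' hD.t'_f'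
      hD.t_s' this
    exact isIso_of_isPullback_comp_fst_comp_snd m (.of_isLimit hl)
  tfae_finish
end

section
/- In a pointed regular category, every Mal'tsev object is a strongly unital object. -/
open CategoryTheory CategoryTheory.Limits

universe v u

variable {C : Type u} [Category.{v} C]

/-!
Pulling the point `(π₁, Δ)` of `Y ⨯ Y` back along `g : X ⟶ Y` gives a point whose total
object `P` is `X ⨯ Y` in disguise, `(x, y) ↦ (x, (g x, y))`, with section `x ↦ (x, g x)`.
`P` also contains the zero section `y ↦ (0, y)`, and it suffices that these two sections are
jointly strongly epimorphic. So let `M ↪ P` contain both, the section through `b : X ⟶ M`.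
The second coordinate `M ⟶ Y` is split by the zero section, so the Mal'tsev property applies
to it and `π₁ : Y ⨯ Y ⟶ Y`. The comparison `M ×_Y (Y ⨯ Y) ⟶ P`,
`(m, (y₁, y₂)) ↦ (x(m), y₂)`, is split by `(x, y) ↦ (b x, (g x, y))` and sends both Mal'tsev
sections into `M`, so `M = P`.
-/

namespace JointlyStronglyEpi

variable {X Y A : C} {r : X ⟶ A} {s : Y ⟶ A}

theorem of_fac_left {X' : C} {r' : X' ⟶ A} (h : JointlyStronglyEpi r' s) (a : X' ⟶ X)
    (ha : a ≫ r = r') : JointlyStronglyEpi r s := by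
  rintro M m hm ⟨r₁, hr₁⟩ hs
  exact h m hm ⟨a ≫ r₁, by rw [Category.assoc, hr₁, ha]⟩ hs

theorem comp_strongEpi [HasPullbacks C] (h : JointlyStronglyEpi r s) {B : C} (χ : A ⟶ B)
    [StrongEpi χ] : JointlyStronglyEpi (r ≫ χ) (s ≫ χ) := by
  rintro M m hm ⟨r₁, hr₁⟩ ⟨s₁, hs₁⟩
  have : IsIso (pullback.fst χ m) :=
    h _ inferInstance ⟨pullback.lift r r₁ hr₁.symm, pullback.lift_fst _ _ _⟩
      ⟨pullback.lift s s₁ hs₁.symm, pullback.lift_fst _ _ _⟩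
  have : StrongEpi ((inv (pullback.fst χ m) ≫ pullback.snd χ m) ≫ m) := by
    rwa [Category.assoc, ← pullback.condition, IsIso.inv_hom_id_assoc]
  have : StrongEpi m := strongEpi_of_strongEpi (inv (pullback.fst χ m) ≫ pullback.snd χ m) m
  exact isIso_of_mono_of_strongEpi m

end JointlyStronglyEpi

section DiagonalPoint

variable [HasPullbacks C] [HasBinaryProducts C] {X Y T : C} (g : X ⟶ Y)

noncomputable def diagPullbackLift (x : T ⟶ X) (y : T ⟶ Y) :
    T ⟶ pullback g (prod.fst : Y ⨯ Y ⟶ Y) :=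
  pullback.lift x (prod.lift (x ≫ g) y) (prod.lift_fst _ _).symm

noncomputable def diagPullbackSnd : pullback g (prod.fst : Y ⨯ Y ⟶ Y) ⟶ Y :=
  pullback.snd g prod.fst ≫ prod.snd

@[simp]
theorem diagPullbackLift_fst (x : T ⟶ X) (y : T ⟶ Y) :
    diagPullbackLift g x y ≫ pullback.fst g prod.fst = x :=
  pullback.lift_fst _ _ _

@[simp]
theorem diagPullbackLift_snd (x : T ⟶ X) (y : T ⟶ Y) :
    diagPullbackLift g x y ≫ diagPullbackSnd g = y := by
  rw [diagPullbackLift, diagPullbackSnd, pullback.lift_snd_assoc, prod.lift_snd]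

theorem diagPullback_hom_ext {f f' : T ⟶ pullback g (prod.fst : Y ⨯ Y ⟶ Y)}
    (h₁ : f ≫ pullback.fst g prod.fst = f' ≫ pullback.fst g prod.fst)
    (h₂ : f ≫ diagPullbackSnd g = f' ≫ diagPullbackSnd g) : f = f' := by
  refine pullback.hom_ext h₁ (prod.hom_ext ?_ (by simpa [diagPullbackSnd] using h₂))
  simp only [Category.assoc, ← pullback.condition, reassoc_of% h₁]

theorem pullback_lift_diag_eq_diagPullbackLift :
    pullback.lift (𝟙 X) (g ≫ prod.lift (𝟙 Y) (𝟙 Y))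
        (by rw [Category.id_comp, Category.assoc, prod.lift_fst, Category.comp_id]) =
      diagPullbackLift g (𝟙 X) g := by
  refine diagPullback_hom_ext g (by rw [pullback.lift_fst, diagPullbackLift_fst]) ?_
  rw [diagPullbackLift_snd, diagPullbackSnd, pullback.lift_snd_assoc, Category.assoc,
    prod.lift_snd, Category.comp_id]

noncomputable def diagPullbackComparison {M : C} (m : M ⟶ pullback g (prod.fst : Y ⨯ Y ⟶ Y)) :
    pullback (m ≫ diagPullbackSnd g) (prod.fst : Y ⨯ Y ⟶ Y) ⟶
      pullback g (prod.fst : Y ⨯ Y ⟶ Y) :=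
  diagPullbackLift g (pullback.fst _ (prod.fst : Y ⨯ Y ⟶ Y) ≫ m ≫ pullback.fst g prod.fst)
    (pullback.snd _ (prod.fst : Y ⨯ Y ⟶ Y) ≫ prod.snd)

theorem isSplitEpi_diagPullbackComparison {M : C} (m : M ⟶ pullback g (prod.fst : Y ⨯ Y ⟶ Y))
    (b : X ⟶ M) (hb : b ≫ m = diagPullbackLift g (𝟙 X) g) :
    IsSplitEpi (diagPullbackComparison g m) := by
  have hbp : b ≫ m ≫ pullback.fst g prod.fst = 𝟙 X := by
    rw [← Category.assoc, hb, diagPullbackLift_fst]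
  have hbq : b ≫ m ≫ diagPullbackSnd g = g := by
    rw [← Category.assoc, hb, diagPullbackLift_snd]
  refine IsSplitEpi.mk' ⟨pullback.lift (pullback.fst g prod.fst ≫ b)
    (prod.lift (pullback.fst g prod.fst ≫ g) (diagPullbackSnd g))
    (by rw [Category.assoc, hbq, prod.lift_fst]), diagPullback_hom_ext g ?_ ?_⟩
  · simp only [diagPullbackComparison, Category.assoc, diagPullbackLift_fst,
      pullback.lift_fst_assoc, hbp, Category.comp_id, Category.id_comp]
  · simp only [diagPullbackComparison, Category.assoc, diagPullbackLift_snd,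
      pullback.lift_snd_assoc, prod.lift_snd, Category.id_comp]

end DiagonalPoint

theorem IsMaltsevObject.jointlyStronglyEpi_zeroSection_diagSection [HasPullbacks C]
    [HasBinaryProducts C] [HasZeroMorphisms C] {Y : C} (hY : IsMaltsevObject Y) {X : C}
    (g : X ⟶ Y) :
    JointlyStronglyEpi (diagPullbackLift g 0 (𝟙 Y))
      (pullback.lift (𝟙 X) (g ≫ prod.lift (𝟙 Y) (𝟙 Y))
        (by rw [Category.id_comp, Category.assoc, prod.lift_fst, Category.comp_id])) := by
  rintro M m hm ⟨u, hu⟩ ⟨b, hb⟩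
  rw [pullback_lift_diag_eq_diagPullbackLift] at hb
  have hup : u ≫ m ≫ pullback.fst g prod.fst = 0 := by
    rw [← Category.assoc, hu, diagPullbackLift_fst]
  have huq : u ≫ m ≫ diagPullbackSnd g = 𝟙 Y := by
    rw [← Category.assoc, hu, diagPullbackLift_snd]
  have := isSplitEpi_diagPullbackComparison g m b hb
  refine (hY (m ≫ diagPullbackSnd g) u prod.fst (prod.lift (𝟙 Y) (𝟙 Y)) huq
    (prod.lift_fst _ _)).comp_strongEpi (diagPullbackComparison g m) m hm
    ⟨𝟙 M, diagPullback_hom_ext g ?_ ?_⟩ ⟨prod.snd ≫ u, diagPullback_hom_ext g ?_ ?_⟩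
  · simp only [diagPullbackComparison, Category.assoc, diagPullbackLift_fst,
      pullback.lift_fst_assoc, Category.id_comp]
  · simp only [diagPullbackComparison, Category.assoc, diagPullbackLift_snd,
      pullback.lift_snd_assoc, prod.lift_snd, Category.id_comp, Category.comp_id]
  · simp only [diagPullbackComparison, Category.assoc, diagPullbackLift_fst,
      pullback.lift_fst_assoc, hup, comp_zero]
  · simp only [diagPullbackComparison, Category.assoc, diagPullbackLift_snd,
      pullback.lift_snd_assoc, huq, Category.id_comp, Category.comp_id]

theorem statement17_general [HasFiniteLimits C] [HasZeroMorphisms C]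
    (Y : C) (h : IsMaltsevObject Y) : StronglyUnitalObject Y := by
  intro X g W w
  exact (h.jointlyStronglyEpi_zeroSection_diagSection g).of_fac_left
    (pullback.lift 0 (diagPullbackLift g 0 (𝟙 Y)) (by simp)) (pullback.lift_snd _ _ _)

/-- In a pointed regular category, every Mal'tsev object is a strongly unital
object. -/
theorem statement17 [HasFiniteLimits C] [HasZeroObject C] [HasZeroMorphisms C]
    (hcoeq : ∀ {X Y : C} (f : X ⟶ Y),
      HasCoequalizer (pullback.fst f f) (pullback.snd f f))
    (hstab : ∀ {X Y Z : C} (f : X ⟶ Z) (g : Y ⟶ Z),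
      _root_.IsRegularEpi f → _root_.IsRegularEpi (pullback.snd f g))
    (Y : C) (h : IsMaltsevObject Y) : StronglyUnitalObject Y :=
  statement17_general Y h
end

section
/- In a pointed finitely complete category C, the zero object is a Mal'tsev object if and only if C is a unital category. -/
open CategoryTheory CategoryTheory.Limits

universe v u

variable {C : Type u} [Category.{v} C]

lemma JointlyStronglyEpi.comp_isIso_s18 {X Y A B : C} {r : X ⟶ A} {s : Y ⟶ A}
    (h : JointlyStronglyEpi r s) (e : A ⟶ B) [IsIso e] :
    JointlyStronglyEpi (r ≫ e) (s ≫ e) := by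
  rintro M m hm ⟨r', hr'⟩ ⟨s', hs'⟩
  have : IsIso (m ≫ inv e) :=
    h (m ≫ inv e) inferInstance ⟨r', by simp [reassoc_of% hr']⟩ ⟨s', by simp [reassoc_of% hs']⟩
  simpa using (inferInstance : IsIso ((m ≫ inv e) ≫ e))

lemma jointlyStronglyEpi_comp_isIso_iff {X Y A B : C} (r : X ⟶ A) (s : Y ⟶ A)
    (e : A ⟶ B) [IsIso e] :
    JointlyStronglyEpi (r ≫ e) (s ≫ e) ↔ JointlyStronglyEpi r s :=
  ⟨fun h => by simpa using h.comp_isIso_s18 (inv e), fun h => h.comp_isIso_s18 e⟩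

section ZeroObject

open ZeroObject

variable [HasZeroObject C] [HasZeroMorphisms C] [HasBinaryProducts C]

lemma pullback_lift_pullbackZeroZeroIso_hom {W X Y : C} (a : W ⟶ X) (b : W ⟶ Y)
    (w : a ≫ (0 : X ⟶ 0) = b ≫ 0) :
    pullback.lift a b w ≫ (pullbackZeroZeroIso X Y).hom = prod.lift a b := by
  apply prod.hom_ext
  · rw [Category.assoc, pullbackZeroZeroIso_hom_fst, prod.lift_fst]
    exact pullback.lift_fst a b w
  · rw [Category.assoc, pullbackZeroZeroIso_hom_snd, prod.lift_snd]
    exact pullback.lift_snd a b w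

lemma jointlyStronglyEpi_pullback_lift_zero_iff {V W X Y : C} (a : V ⟶ X) (b : V ⟶ Y)
    (c : W ⟶ X) (d : W ⟶ Y) (w : a ≫ (0 : X ⟶ 0) = b ≫ 0) (w' : c ≫ (0 : X ⟶ 0) = d ≫ 0) :
    JointlyStronglyEpi (pullback.lift a b w) (pullback.lift c d w') ↔
      JointlyStronglyEpi (prod.lift a b) (prod.lift c d) := by
  rw [← jointlyStronglyEpi_comp_isIso_iff _ _ (pullbackZeroZeroIso X Y).hom,
    pullback_lift_pullbackZeroZeroIso_hom, pullback_lift_pullbackZeroZeroIso_hom]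

end ZeroObject

open ZeroObject in
/-- In a pointed finitely complete category `C`, the zero object is a Mal'tsev
object iff `C` is a unital category. -/
theorem statement18 [HasFiniteLimits C] [HasZeroObject C] [HasZeroMorphisms C] :
    IsMaltsevObject (0 : C) ↔
      ∀ (X Y : C),
        JointlyStronglyEpi (prod.lift (𝟙 X) (0 : X ⟶ Y))
          (prod.lift (0 : Y ⟶ X) (𝟙 Y)) := by
  constructor
  · intro h X Y
    have := h (0 : X ⟶ 0) 0 (0 : Y ⟶ 0) 0 (by simp) (by simp)
    rw [jointlyStronglyEpi_pullback_lift_zero_iff] at this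
    simpa using this
  · intro h A X f s g t _ _
    obtain rfl := zero_of_to_zero f
    obtain rfl := zero_of_to_zero g
    rw [jointlyStronglyEpi_pullback_lift_zero_iff]
    simpa using h A X
end
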